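/- The free groupoid (localization at all morphisms) of a permutative category is a permutative groupoid: if C is a symmetric monoidal category whose monoidal structure is strictly associative and strictly unital, then Π₁(C) inherits a strictly associative, strictly unital symmetric monoidal structure such that the unit map C → Π₁(C) is a strict symmetric monoidal functor. -/

import Mathlib

open CategoryTheory

universe u

/-- A permutative (strict symmetric monoidal) structure on a category `C`:
a tensor product bifunctor which is strictly associative and strictly unital,
together with a symmetry natural isomorphism satisfying the symmetry and
hexagon axioms. -/
structure PermutativeStruct (C : Type u) [Category.{u} C] where
  /-- the tensor product bifunctor -/
  T : C × C ⥤ C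
  /-- the unit object -/
  e : C
  /-- strict associativity on objects -/
  assoc : ∀ X Y Z : C, T.obj (T.obj (X, Y), Z) = T.obj (X, T.obj (Y, Z))
  /-- strict associativity as an equality of functors -/
  assoc_functor :
    Functor.prod T (𝟭 C) ⋙ T = prod.associator C C C ⋙ Functor.prod (𝟭 C) T ⋙ T
  /-- strict left unitality -/
  unitl : Prod.sectR e C ⋙ T = 𝟭 C
  /-- strict right unitality -/
  unitr : Prod.sectL C e ⋙ T = 𝟭 C
  /-- the symmetry natural isomorphism -/
  braiding : T ≅ CategoryTheory.Prod.swap C C ⋙ T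
  /-- the symmetry is an involution -/
  symmetry : ∀ X Y : C,
    braiding.hom.app (X, Y) ≫ braiding.hom.app (Y, X) = 𝟙 (T.obj (X, Y))
  /-- the hexagon axiom (in strict form) -/
  hexagon : ∀ X Y Z : C,
    braiding.hom.app (T.obj (X, Y), Z) =
      eqToHom (assoc X Y Z) ≫
        T.map ((𝟙 X, braiding.hom.app (Y, Z)) :
          ((X, T.obj (Y, Z)) : C × C) ⟶ (X, T.obj (Z, Y))) ≫
        eqToHom (assoc X Z Y).symm ≫
        T.map ((braiding.hom.app (X, Z), 𝟙 Y) :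
          ((T.obj (X, Z), Y) : C × C) ⟶ (T.obj (Z, X), Y)) ≫
        eqToHom (assoc Z X Y)

/-- A strict symmetric monoidal functor between permutative categories:
it commutes with the tensor bifunctors on the nose, preserves the unit object,
and is compatible with the symmetries. -/
structure IsStrictSymMonFunctor {C : Type u} [Category.{u} C] {D : Type u} [Category.{u} D]
    (P : PermutativeStruct C) (Q : PermutativeStruct D) (F : C ⥤ D) : Prop where
  tensor : P.T ⋙ F = F.prod F ⋙ Q.T
  unit : F.obj P.e = Q.e
  braid : ∀ X Y : C,
    F.map (P.braiding.hom.app (X, Y)) =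
      eqToHom (Functor.congr_obj tensor (X, Y)) ≫
        Q.braiding.hom.app (F.obj X, F.obj Y) ≫
        eqToHom (Functor.congr_obj tensor (Y, X)).symm

/-- `η : C ⥤ G` exhibits the groupoid `G` as the free groupoid `Π₁(C)` on `C`. -/
def IsFreeGroupoidOn {C : Type u} [Category.{u} C] {G : Type u} [Groupoid.{u} G]
    (η : C ⥤ G) : Prop :=
  ∀ (H : Type u) [Groupoid.{u} H], ∀ F : C ⥤ H, ∃! F' : G ⥤ H, η ⋙ F' = F

/-!
`Π₁` has a strict universal property, and it commutes with binary products: `η × θ` is free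
because a functor out of `C × D` is a functor `C ⥤ (D ⥤ H)`, and `D ⥤ H` is again a groupoid.
So `P.T ⋙ η` extends uniquely to a tensor product on `G`, and the unit and associativity laws
hold because they hold after precomposing with `η`, `η × η × η`. A natural transformation into a
groupoid is a functor into its arrow groupoid, so the symmetry of `P` extends to one of `G`.
Finally `η` is surjective on objects, so the symmetry and hexagon axioms on `G` are images under
`η` of those of `P`.
-/

open scoped CategoryTheory.Prod

namespace CategoryTheory

noncomputable instance Functor.groupoid (A : Type*) [Category A] (H : Type*) [Groupoid H] :
    Groupoid (A ⥤ H) :=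
  Groupoid.ofIsIso fun f => NatIso.isIso_of_isIso_app f

noncomputable instance Arrow.groupoid (H : Type*) [Groupoid H] : Groupoid (Arrow H) :=
  Groupoid.ofIsIso fun f => Arrow.isIso_of_isIso_left_of_isIso_right f

instance ObjectProperty.FullSubcategory.groupoid {G : Type*} [Groupoid G] (p : ObjectProperty G) :
    Groupoid p.FullSubcategory :=
  Groupoid.ofFullyFaithfulToGroupoid p.ι p.fullyFaithfulι

theorem Arrow.eqToHom_comp_hom_comp_eqToHom {A : Type*} [Category A] {X : Arrow A} {a b : A}
    {f : a ⟶ b} (h : X = Arrow.mk f) (p : a = X.left) (q : X.right = b) :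
    eqToHom p ≫ X.hom ≫ eqToHom q = f := by
  subst h
  simp

def NatTrans.arrowFunctor {A H : Type*} [Category A] [Category H] {F₁ F₂ : A ⥤ H}
    (β : F₁ ⟶ F₂) : A ⥤ Arrow H where
  obj a := Arrow.mk (β.app a)
  map f := Arrow.homMk (F₁.map f) (F₂.map f) (β.naturality f)

namespace Prod

variable {A B C D : Type*} [Category A] [Category B] [Category C] [Category D]

theorem sectR_comp_prod (F₁ : A ⥤ B) (F₂ : C ⥤ D) (a : A) :
    sectR a C ⋙ F₁.prod F₂ = F₂ ⋙ sectR (F₁.obj a) D :=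
  Functor.hext (fun _ => rfl) fun _ _ _ => heq_of_eq (Prod.hom_ext (F₁.map_id a) rfl)

theorem sectL_comp_prod (F₁ : A ⥤ B) (F₂ : C ⥤ D) (c : C) :
    sectL A c ⋙ F₁.prod F₂ = F₁ ⋙ sectL B (F₂.obj c) :=
  Functor.hext (fun _ => rfl) fun _ _ _ => heq_of_eq (Prod.hom_ext rfl (F₂.map_id c))

theorem id_mkHom_conj_eqToHom (a : A) {b₁ b₂ b₃ b₄ : B} (p : b₁ = b₂) (g : b₂ ⟶ b₃)
    (q : b₃ = b₄) :
    𝟙 a ×ₘ (eqToHom p ≫ g ≫ eqToHom q) =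
      eqToHom (congrArg (a, ·) p) ≫ (𝟙 a ×ₘ g) ≫ eqToHom (congrArg (a, ·) q) := by
  subst p q
  simp

theorem mkHom_id_conj_eqToHom {a₁ a₂ a₃ a₄ : A} (p : a₁ = a₂) (f : a₂ ⟶ a₃) (q : a₃ = a₄)
    (b : B) :
    (eqToHom p ≫ f ≫ eqToHom q) ×ₘ 𝟙 b =
      eqToHom (congrArg (·, b) p) ≫ (f ×ₘ 𝟙 b) ≫ eqToHom (congrArg (·, b) q) := by
  subst p q
  simp

end Prod

end CategoryTheory

namespace IsFreeGroupoidOn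

variable {C : Type u} [Category.{u} C] {G : Type u} [Groupoid.{u} G] {η : C ⥤ G}
  {H : Type u} [Groupoid.{u} H]

noncomputable def lift (hη : IsFreeGroupoidOn η) (F : C ⥤ H) : G ⥤ H :=
  (hη H F).exists.choose

@[simp]
theorem fac (hη : IsFreeGroupoidOn η) (F : C ⥤ H) : η ⋙ hη.lift F = F :=
  (hη H F).exists.choose_spec

theorem hom_ext (hη : IsFreeGroupoidOn η) {F₁ F₂ : G ⥤ H} (h : η ⋙ F₁ = η ⋙ F₂) : F₁ = F₂ :=
  (hη H _).unique h rfl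

theorem obj_surjective (hη : IsFreeGroupoidOn η) : Function.Surjective η.obj := by
  intro g
  let p : ObjectProperty G := fun g => ∃ c, η.obj c = g
  have hp : hη.lift (p.lift η fun c => ⟨c, rfl⟩) ⋙ p.ι = 𝟭 G :=
    hη.hom_ext (by rw [← Functor.assoc, fac]; rfl)
  obtain ⟨c, hc⟩ := ((hη.lift (p.lift η fun c => ⟨c, rfl⟩)).obj g).property
  exact ⟨c, hc.trans (Functor.congr_obj hp g)⟩

theorem exists_whiskerLeft_eq (hη : IsFreeGroupoidOn η) {F₁ F₂ : G ⥤ H}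
    (β : η ⋙ F₁ ⟶ η ⋙ F₂) : ∃ α : F₁ ⟶ F₂, Functor.whiskerLeft η α = β := by
  let B := hη.lift (NatTrans.arrowFunctor β)
  have hl : B ⋙ Arrow.leftFunc = F₁ := hη.hom_ext (by rw [← Functor.assoc, fac]; rfl)
  have hr : B ⋙ Arrow.rightFunc = F₂ := hη.hom_ext (by rw [← Functor.assoc, fac]; rfl)
  refine ⟨eqToHom hl.symm ≫ Functor.whiskerLeft B Arrow.leftToRight ≫ eqToHom hr, ?_⟩
  ext c
  simp only [NatTrans.comp_app, eqToHom_app, Functor.whiskerLeft_app, Arrow.leftToRight_app]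
  exact Arrow.eqToHom_comp_hom_comp_eqToHom (Functor.congr_obj (hη.fac _) c) _ _

noncomputable def liftNatTrans (hη : IsFreeGroupoidOn η) {F₁ F₂ : G ⥤ H}
    (β : η ⋙ F₁ ⟶ η ⋙ F₂) : F₁ ⟶ F₂ :=
  (hη.exists_whiskerLeft_eq β).choose

@[simp]
theorem whiskerLeft_liftNatTrans (hη : IsFreeGroupoidOn η) {F₁ F₂ : G ⥤ H}
    (β : η ⋙ F₁ ⟶ η ⋙ F₂) : Functor.whiskerLeft η (hη.liftNatTrans β) = β :=
  (hη.exists_whiskerLeft_eq β).choose_spec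

variable {D : Type u} [Category.{u} D] {K : Type u} [Groupoid.{u} K] {θ : D ⥤ K}

open Functor

theorem prod_hom_ext (hη : IsFreeGroupoidOn η) (hθ : IsFreeGroupoidOn θ) {F₁ F₂ : G × K ⥤ H}
    (h : η.prod θ ⋙ F₁ = η.prod θ ⋙ F₂) : F₁ = F₂ := by
  apply curry_obj_injective
  apply hη.hom_ext
  apply flip_injective
  apply hθ.hom_ext
  apply flip_injective
  apply uncurry_obj_injective
  simpa only [uncurry_obj_curry_obj_flip_flip] using h

theorem prod (hη : IsFreeGroupoidOn η) (hθ : IsFreeGroupoidOn θ) :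
    IsFreeGroupoidOn (η.prod θ) := by
  intro H _ F
  let L := uncurry.obj (hθ.lift (hη.lift (curry.obj F)).flip).flip
  have hL : η.prod θ ⋙ L = F := by
    have hθL : θ ⋙ (curry.obj L).flip = (hη.lift (curry.obj F)).flip := by
      simp only [L, curry_obj_uncurry_obj, Functor.flip_flip, fac]
    rw [← uncurry_obj_curry_obj_flip_flip', hθL, Functor.flip_flip, fac, uncurry_obj_curry_obj]
  exact ⟨L, hL, fun F' hF' => hη.prod_hom_ext hθ (hF'.trans hL.symm)⟩

end IsFreeGroupoidOn

namespace PermutativeStruct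

variable {C : Type u} [Category.{u} C] (P : PermutativeStruct C) {G : Type u} [Groupoid.{u} G]
  {η : C ⥤ G} {T : G × G ⥤ G}

theorem unitl_of_comp_eq (hη : IsFreeGroupoidOn η) (hT : P.T ⋙ η = η.prod η ⋙ T) :
    Prod.sectR (η.obj P.e) G ⋙ T = 𝟭 G :=
  hη.hom_ext <| by
    rw [← Functor.assoc, ← Prod.sectR_comp_prod, Functor.assoc, ← hT, ← Functor.assoc, P.unitl]
    rfl

theorem unitr_of_comp_eq (hη : IsFreeGroupoidOn η) (hT : P.T ⋙ η = η.prod η ⋙ T) :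
    Prod.sectL G (η.obj P.e) ⋙ T = 𝟭 G :=
  hη.hom_ext <| by
    rw [← Functor.assoc, ← Prod.sectL_comp_prod, Functor.assoc, ← hT, ← Functor.assoc, P.unitr]
    rfl

theorem assoc_functor_of_comp_eq (hη : IsFreeGroupoidOn η) (hT : P.T ⋙ η = η.prod η ⋙ T) :
    T.prod (𝟭 G) ⋙ T = prod.associator G G G ⋙ (𝟭 G).prod T ⋙ T := by
  apply ((hη.prod hη).prod hη).hom_ext
  calc (η.prod η).prod η ⋙ T.prod (𝟭 G) ⋙ T
      = (η.prod η ⋙ T).prod η ⋙ T := rfl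
    _ = (P.T ⋙ η).prod η ⋙ T := by rw [hT]
    _ = P.T.prod (𝟭 C) ⋙ η.prod η ⋙ T := rfl
    _ = P.T.prod (𝟭 C) ⋙ P.T ⋙ η := by rw [hT]
    _ = prod.associator C C C ⋙ (𝟭 C).prod P.T ⋙ P.T ⋙ η := congrArg (· ⋙ η) P.assoc_functor
    _ = prod.associator C C C ⋙ (𝟭 C).prod P.T ⋙ η.prod η ⋙ T := by rw [hT]
    _ = prod.associator C C C ⋙ η.prod (P.T ⋙ η) ⋙ T := rfl
    _ = (η.prod η).prod η ⋙ prod.associator G G G ⋙ (𝟭 G).prod T ⋙ T := by rw [hT]; rfl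

theorem symmetry_of_map_braiding (hsurj : Function.Surjective η.obj)
    (hT : P.T ⋙ η = η.prod η ⋙ T) {α : T ⟶ CategoryTheory.Prod.swap G G ⋙ T}
    (hα : ∀ x y : C, η.map (P.braiding.hom.app (x, y)) =
      eqToHom (Functor.congr_obj hT (x, y)) ≫ α.app (η.obj x, η.obj y) ≫
        eqToHom (Functor.congr_obj hT (y, x)).symm)
    (X Y : G) : α.app (X, Y) ≫ α.app (Y, X) = 𝟙 (T.obj (X, Y)) := by
  obtain ⟨x, rfl⟩ := hsurj X
  obtain ⟨y, rfl⟩ := hsurj Y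
  have h := congrArg η.map (P.symmetry x y)
  rw [η.map_comp, hα, hα, η.map_id] at h
  simp only [Category.assoc, eqToHom_trans_assoc, eqToHom_refl, Category.id_comp] at h
  rw [eqToHom_comp_iff, ← Category.assoc, comp_eqToHom_iff] at h
  simpa using h

theorem hexagon_of_map_braiding (hsurj : Function.Surjective η.obj)
    (hT : P.T ⋙ η = η.prod η ⋙ T)
    (hassoc : ∀ X Y Z : G, T.obj (T.obj (X, Y), Z) = T.obj (X, T.obj (Y, Z)))
    {α : T ⟶ CategoryTheory.Prod.swap G G ⋙ T}
    (hα : ∀ x y : C, η.map (P.braiding.hom.app (x, y)) =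
      eqToHom (Functor.congr_obj hT (x, y)) ≫ α.app (η.obj x, η.obj y) ≫
        eqToHom (Functor.congr_obj hT (y, x)).symm)
    (X Y Z : G) :
    α.app (T.obj (X, Y), Z) =
      eqToHom (hassoc X Y Z) ≫ T.map (𝟙 X ×ₘ α.app (Y, Z)) ≫ eqToHom (hassoc X Z Y).symm ≫
        T.map (α.app (X, Z) ×ₘ 𝟙 Y) ≫ eqToHom (hassoc Z X Y) := by
  obtain ⟨x, rfl⟩ := hsurj X
  obtain ⟨y, rfl⟩ := hsurj Y
  obtain ⟨z, rfl⟩ := hsurj Z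
  have hTmap : ∀ {a b : C × C} (f : a ⟶ b), η.map (P.T.map f) =
      eqToHom (Functor.congr_obj hT a) ≫ T.map (η.map f.1 ×ₘ η.map f.2) ≫
        eqToHom (Functor.congr_obj hT b).symm := fun f => Functor.congr_hom hT f
  have h := congrArg η.map (P.hexagon x y z)
  simp only [Functor.map_comp, eqToHom_map, hα, hTmap, η.map_id, Prod.id_mkHom_conj_eqToHom,
    Prod.mkHom_id_conj_eqToHom] at h
  rw [eqToHom_comp_iff, ← Category.assoc, comp_eqToHom_iff] at h
  rw [NatTrans.congr α (Prod.ext (Functor.congr_obj hT (x, y)).symm rfl :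
    (T.obj (η.obj x, η.obj y), η.obj z) = (η.obj (P.T.obj (x, y)), η.obj z))]
  simp only [eqToHom_map, h]
  simp

noncomputable def liftTensor (hη : IsFreeGroupoidOn η) : G × G ⥤ G :=
  (hη.prod hη).lift (P.T ⋙ η)

theorem comp_liftTensor (hη : IsFreeGroupoidOn η) : P.T ⋙ η = η.prod η ⋙ P.liftTensor hη :=
  ((hη.prod hη).fac _).symm

noncomputable def liftBraiding (hη : IsFreeGroupoidOn η) :
    P.liftTensor hη ⟶ CategoryTheory.Prod.swap G G ⋙ P.liftTensor hη :=
  (hη.prod hη).liftNatTrans <|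
    eqToHom (P.comp_liftTensor hη).symm ≫ Functor.whiskerRight P.braiding.hom η ≫
      eqToHom (by rw [Functor.assoc, P.comp_liftTensor hη]; rfl)

theorem map_braiding_hom_app (hη : IsFreeGroupoidOn η) (x y : C) :
    η.map (P.braiding.hom.app (x, y)) =
      eqToHom (Functor.congr_obj (P.comp_liftTensor hη) (x, y)) ≫
        (P.liftBraiding hη).app (η.obj x, η.obj y) ≫
        eqToHom (Functor.congr_obj (P.comp_liftTensor hη) (y, x)).symm := by
  have h : (P.liftBraiding hη).app (η.obj x, η.obj y) = _ :=
    NatTrans.congr_app ((hη.prod hη).whiskerLeft_liftNatTrans _) (x, y)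
  simp only [NatTrans.comp_app, eqToHom_app, Functor.whiskerRight_app] at h
  rw [h]
  simp

noncomputable def lift (hη : IsFreeGroupoidOn η) : PermutativeStruct G where
  T := P.liftTensor hη
  e := η.obj P.e
  assoc X Y Z :=
    Functor.congr_obj (P.assoc_functor_of_comp_eq hη (P.comp_liftTensor hη)) ((X, Y), Z)
  assoc_functor := P.assoc_functor_of_comp_eq hη (P.comp_liftTensor hη)
  unitl := P.unitl_of_comp_eq hη (P.comp_liftTensor hη)
  unitr := P.unitr_of_comp_eq hη (P.comp_liftTensor hη)
  braiding := asIso (P.liftBraiding hη)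
  symmetry :=
    P.symmetry_of_map_braiding hη.obj_surjective (P.comp_liftTensor hη)
      (P.map_braiding_hom_app hη)
  hexagon :=
    P.hexagon_of_map_braiding hη.obj_surjective (P.comp_liftTensor hη) _
      (P.map_braiding_hom_app hη)

theorem isStrictSymMonFunctor_lift (hη : IsFreeGroupoidOn η) :
    IsStrictSymMonFunctor P (P.lift hη) η :=
  ⟨P.comp_liftTensor hη, rfl, P.map_braiding_hom_app hη⟩

end PermutativeStruct

/-- The free groupoid of a permutative category is a permutative groupoid: the
free groupoid `Π₁(C)` of a permutative category `C` inherits a permutative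
(strictly associative and unital symmetric monoidal) structure making the unit
functor `C ⥤ Π₁(C)` a strict symmetric monoidal functor. -/
theorem freeGroupoid_permutative {C : Type u} [Category.{u} C]
    (P : PermutativeStruct C) {G : Type u} [Groupoid.{u} G]
    (η : C ⥤ G) (hη : IsFreeGroupoidOn η) :
    ∃ Q : PermutativeStruct G, IsStrictSymMonFunctor P Q η :=
  ⟨P.lift hη, P.isStrictSymMonFunctor_lift hη⟩
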